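/- For polytropic index n₀ = 5 (i.e. Υ₀ = 5/6), the function Φ(U,V) = √U · V^{3/2} (U(8−9V) + 7V − 6) · (1−U)^{−3/2} (1−V)^{−5/2} is a first integral of the planar system: Φ(U(λ), V(λ)) is constant along every solution with values in the open square (0,1)². -/

import Mathlib

/-!
`Φ²` is the rational function `u v³ (u(8−9v)+7v−6)² / ((1−u)³ (1−v)⁵)`, and the numerator of
its quotient-rule derivative along the vector field vanishes identically, so `Φ²` is constant
on solutions. Since `Φ` is continuous along a solution and time is connected, a continuous
function with constant square is constant.
-/

open Set

/-- The first integral `Φ(U,V) = √U·V^{3/2}(U(8−9V)+7V−6)·(1−U)^{−3/2}(1−V)^{−5/2}`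
for the `n₀ = 5` compactified Newtonian system. -/
noncomputable def PhiFun (U V : ℝ) : ℝ :=
  Real.sqrt U * V ^ ((3 : ℝ) / 2) * (U * (8 - 9 * V) + 7 * V - 6) *
    (1 - U) ^ (-(3 : ℝ) / 2) * (1 - V) ^ (-(5 : ℝ) / 2)

theorem Continuous.eq_of_sq_eq {X : Type*} [TopologicalSpace X] [PreconnectedSpace X]
    {f : X → ℝ} (hf : Continuous f) (hsq : ∀ x y, f x ^ 2 = f y ^ 2) (x y : X) :
    f x = f y :=
  isPreconnected_univ.constant_of_mapsTo (toFinite {f x, -f x}).isDiscrete hf.continuousOn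
    (fun z _ => sq_eq_sq_iff_eq_or_eq_neg.mp (hsq z x)) (mem_univ x) (mem_univ y)

theorem Real.rpow_intCast_div_two_sq {x : ℝ} (hx : 0 ≤ x) (k : ℤ) :
    (x ^ ((k : ℝ) / 2)) ^ 2 = x ^ k := by
  rw [← Real.rpow_mul_natCast hx, Nat.cast_ofNat, div_mul_cancel₀ _ two_ne_zero,
    Real.rpow_intCast]

noncomputable def phiSq (u v : ℝ) : ℝ :=
  u * v ^ 3 * (u * (8 - 9 * v) + 7 * v - 6) ^ 2 / ((1 - u) ^ 3 * (1 - v) ^ 5)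

theorem phiFun_sq {u v : ℝ} (hu : u ∈ Icc (0 : ℝ) 1) (hv : v ∈ Icc (0 : ℝ) 1) :
    PhiFun u v ^ 2 = phiSq u v := by
  have hv3 := Real.rpow_intCast_div_two_sq hv.1 3
  have hu3 := Real.rpow_intCast_div_two_sq (sub_nonneg.2 hu.2) (-3)
  have hv5 := Real.rpow_intCast_div_two_sq (sub_nonneg.2 hv.2) (-5)
  push_cast at hv3 hu3 hv5
  rw [PhiFun, phiSq, mul_pow, mul_pow, mul_pow, mul_pow, Real.sq_sqrt hu.1, hv3, hu3, hv5,
    zpow_neg, zpow_neg, zpow_ofNat, zpow_ofNat, zpow_ofNat, div_eq_mul_inv, mul_inv]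
  ring

theorem Continuous.phiFun {X : Type*} [TopologicalSpace X] {U V : X → ℝ} (hU : Continuous U)
    (hV : Continuous V) (hU1 : ∀ x, U x ≠ 1) (hV1 : ∀ x, V x ≠ 1) :
    Continuous fun x => PhiFun (U x) (V x) := by
  have hV32 : Continuous fun x => V x ^ ((3 : ℝ) / 2) :=
    hV.rpow_const fun _ => Or.inr (by norm_num)
  have hU32 : Continuous fun x => (1 - U x) ^ (-(3 : ℝ) / 2) :=
    (continuous_const.sub hU).rpow_const fun x => Or.inl (sub_ne_zero.2 (hU1 x).symm)
  have hV52 : Continuous fun x => (1 - V x) ^ (-(5 : ℝ) / 2) :=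
    (continuous_const.sub hV).rpow_const fun x => Or.inl (sub_ne_zero.2 (hV1 x).symm)
  exact ((((Real.continuous_sqrt.comp hU).mul hV32).mul (by fun_prop)).mul hU32).mul hV52

theorem hasDerivAt_phiSq_solution {U V : ℝ → ℝ} {l : ℝ}
    (hU : HasDerivAt U
      (U l * (1 - U l) * ((1 - V l) * (3 - 4 * U l) - (5 / 6) * V l * (1 - U l))) l)
    (hV : HasDerivAt V
      (V l * (1 - V l) * ((2 * U l - 1) * (1 - V l) + (1 - 5 / 6) * V l * (1 - U l))) l)
    (hU1 : U l ≠ 1) (hV1 : V l ≠ 1) :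
    HasDerivAt (fun l => phiSq (U l) (V l)) 0 l := by
  have hP := ((hU.mul ((hV.const_mul 9).const_sub 8)).add (hV.const_mul 7)).sub_const 6
  have hN := (hU.mul (hV.pow 3)).mul (hP.pow 2)
  have hD := ((hU.const_sub 1).pow 3).mul ((hV.const_sub 1).pow 5)
  have hD0 : (1 - U l) ^ 3 * (1 - V l) ^ 5 ≠ 0 :=
    mul_ne_zero (pow_ne_zero _ (sub_ne_zero.2 hU1.symm)) (pow_ne_zero _ (sub_ne_zero.2 hV1.symm))
  refine (hN.div hD hD0).congr_deriv ?_
  simp only [Pi.mul_apply, Pi.pow_apply, Pi.add_apply]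
  exact div_eq_zero_iff.2 (Or.inl (by ring))

/-- For polytropic index `n₀ = 5` (`Υ₀ = 5/6`), `Φ` is a first
integral of the compactified Newtonian planar system: it is constant along every
solution with values in the open square `(0,1)²`. -/
theorem stmt5
    (U V : ℝ → ℝ)
    (hU : ∀ l : ℝ, HasDerivAt U
      (U l * (1 - U l) * ((1 - V l) * (3 - 4 * U l) - (5 / 6) * V l * (1 - U l))) l)
    (hV : ∀ l : ℝ, HasDerivAt V
      (V l * (1 - V l) * ((2 * U l - 1) * (1 - V l) + (1 - 5 / 6) * V l * (1 - U l))) l)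
    (hrange : ∀ l : ℝ, U l ∈ Ioo (0:ℝ) 1 ∧ V l ∈ Ioo (0:ℝ) 1) :
    ∀ l₁ l₂ : ℝ, PhiFun (U l₁) (V l₁) = PhiFun (U l₂) (V l₂) := by
  have hU1 l : U l ≠ 1 := (hrange l).1.2.ne
  have hV1 l : V l ≠ 1 := (hrange l).2.2.ne
  have hphiSq l := hasDerivAt_phiSq_solution (hU l) (hV l) (hU1 l) (hV1 l)
  have hphiSq_const : ∀ l₁ l₂, phiSq (U l₁) (V l₁) = phiSq (U l₂) (V l₂) :=
    is_const_of_deriv_eq_zero (fun l => (hphiSq l).differentiableAt) fun l => (hphiSq l).deriv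
  have hUc : Continuous U := continuous_iff_continuousAt.2 fun l => (hU l).continuousAt
  have hVc : Continuous V := continuous_iff_continuousAt.2 fun l => (hV l).continuousAt
  refine (hUc.phiFun hVc hU1 hV1).eq_of_sq_eq fun l₁ l₂ => ?_
  rw [phiFun_sq (Ioo_subset_Icc_self (hrange l₁).1) (Ioo_subset_Icc_self (hrange l₁).2),
    phiFun_sq (Ioo_subset_Icc_self (hrange l₂).1) (Ioo_subset_Icc_self (hrange l₂).2),
    hphiSq_const]
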